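/- arXiv:2509.06194 — 3 statements merged into one kernel-verified Lean document; each statement's English description precedes it below -/
import Mathlib

section
/- Let G be a cactus graph with n vertices, m edges, and b bridges. Then m ≤ ⌊(3(n−1) − b)/2⌋. -/
open Finset SimpleGraph

/-- The degree of a vertex `v`: the number of its neighbors in `G`. -/
noncomputable def gdeg {V : Type*} (G : SimpleGraph V) (v : V) : ℕ :=
  (G.neighborSet v).ncard

/-- The set of edge sets of cycles of `G`.  A cycle (as a subgraph) is identified
with its set of edges, which is invariant under rotation and reversal of the
corresponding closed walks. -/
def cycleEdgeSets {V : Type*} (G : SimpleGraph V) : Set (Set (Sym2 V)) :=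
  {s | ∃ (u : V) (w : G.Walk u u), w.IsCycle ∧ s = {e | e ∈ w.edges}}

/-- The number of cycles of `G`. -/
noncomputable def numCycles {V : Type*} (G : SimpleGraph V) : ℕ :=
  (cycleEdgeSets G).ncard

/-- A cactus graph: a connected graph in which every edge belongs to at most one
cycle, i.e. any two cycles sharing an edge coincide. -/
def IsCactus {V : Type*} (G : SimpleGraph V) : Prop :=
  G.Connected ∧
    ∀ s₁ ∈ cycleEdgeSets G, ∀ s₂ ∈ cycleEdgeSets G, (s₁ ∩ s₂).Nonempty → s₁ = s₂

/-- A unicyclic graph: a connected graph containing exactly one cycle. -/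
def IsUnicyclic {V : Type*} (G : SimpleGraph V) : Prop :=
  G.Connected ∧ ∃! s, s ∈ cycleEdgeSets G

/-- A graph is bridge-less if it has no bridge. -/
def BridgeLess {V : Type*} (G : SimpleGraph V) : Prop :=
  ∀ e, ¬ G.IsBridge e

/-- The number of bridges of `G`. -/
noncomputable def bridgeCount {V : Type*} (G : SimpleGraph V) : ℕ :=
  {e : Sym2 V | G.IsBridge e}.ncard

/-- A triangulated cactus: a cactus in which every cycle has length three and
every edge belongs to a cycle. -/
def IsTriangulatedCactus {V : Type*} (G : SimpleGraph V) : Prop :=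
  IsCactus G ∧ (∀ (u : V) (w : G.Walk u u), w.IsCycle → w.length = 3) ∧
    ∀ e ∈ G.edgeSet, ∃ (u : V) (w : G.Walk u u), w.IsCycle ∧ e ∈ w.edges

/-- The connected component of `x` in `G` contains a cycle. -/
def HasCycleFrom {V : Type*} (G : SimpleGraph V) (x : V) : Prop :=
  ∃ (u : V) (w : G.Walk u u), w.IsCycle ∧ G.Reachable x u

/-- A core cactus: a cactus graph with no bridge whose removal splits the graph
into two components each containing a cycle. -/
def IsCoreCactus {V : Type*} (G : SimpleGraph V) : Prop :=
  IsCactus G ∧ ∀ u v : V, G.IsBridge s(u, v) →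
    ¬ (HasCycleFrom (G.deleteEdges {s(u, v)}) u ∧
       HasCycleFrom (G.deleteEdges {s(u, v)}) v)

/-- `d 1, …, d n` is a degree sequence: non-increasing, with positive entries
bounded by `n - 1`, and with even sum. -/
def IsDegSeq (n : ℕ) (d : ℕ → ℕ) : Prop :=
  (∀ i j, 1 ≤ i → i ≤ j → j ≤ n → d j ≤ d i) ∧
  (∀ i, 1 ≤ i → i ≤ n → 1 ≤ d i ∧ d i ≤ n - 1) ∧
  Even (∑ i ∈ Finset.Icc 1 n, d i)

/-- A graph `G` on vertex set `{1, …, n}` realizes the sequence `d 1, …, d n`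
if the degree of vertex `i` is `d i` for every `i`. -/
def Realizes {n : ℕ} (G : SimpleGraph (Fin n)) (d : ℕ → ℕ) : Prop :=
  ∀ i : Fin n, gdeg G i = d (i.1 + 1)

/-- `μ₁`: the number of entries of the sequence equal to `1`. -/
def mu1 (n : ℕ) (d : ℕ → ℕ) : ℕ :=
  ((Finset.Icc 1 n).filter fun i => d i = 1).card

/-- `μ_odd`: the number of odd entries of the sequence that are greater than `1`. -/
def muOdd (n : ℕ) (d : ℕ → ℕ) : ℕ :=
  ((Finset.Icc 1 n).filter fun i => Odd (d i) ∧ 1 < d i).card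

/-- The bridge parameter `β = max {μ₁, (μ₁ + μ_odd)/2}` of a sequence. -/
def seqBeta (n : ℕ) (d : ℕ → ℕ) : ℕ :=
  max (mu1 n d) ((mu1 n d + muOdd n d) / 2)

/-- `μ₁` of a graph: the number of vertices of degree `1`. -/
noncomputable def gmu1 {V : Type*} (G : SimpleGraph V) : ℕ :=
  {v : V | gdeg G v = 1}.ncard

/-- `μ_odd` of a graph: the number of vertices of odd degree greater than `1`. -/
noncomputable def gmuOdd {V : Type*} (G : SimpleGraph V) : ℕ :=
  {v : V | Odd (gdeg G v) ∧ 1 < gdeg G v}.ncard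

/-- The bridge parameter `β = max {μ₁, (μ₁ + μ_odd)/2}` of a graph. -/
noncomputable def graphBeta {V : Type*} (G : SimpleGraph V) : ℕ :=
  max (gmu1 G) ((gmu1 G + gmuOdd G) / 2)

/-!
Induction on the number of edges. For a tree every edge is a bridge and `m = b = n - 1`, so
`2m + b = 3(n - 1)`. Otherwise delete an edge `e` of some cycle `C`: the graph stays a connected
cactus with one edge fewer, every bridge stays a bridge, and the at least two other edges of `C`
become bridges, since in a cactus any cycle through one of them has the edge set of `C` and so
passes through `e`. So `2m + b` does not decrease, and induction applies.
-/

section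

variable {V : Type*} {G H : SimpleGraph V}

namespace SimpleGraph

lemma IsTree.isBridge_iff (hG : G.IsTree) {e : Sym2 V} : G.IsBridge e ↔ e ∈ G.edgeSet := by
  refine ⟨fun h => ?_, fun h => isAcyclic_iff_forall_isBridge.mp hG.isAcyclic h⟩
  induction e with | h u v => exact h.reachable_iff_adj.mp (hG.connected.preconnected u v)

lemma IsTree.two_mul_ncard_edgeSet_add_bridgeCount [Fintype V] (hG : G.IsTree) :
    2 * G.edgeSet.ncard + bridgeCount G = 3 * (Fintype.card V - 1) := by
  classical
  have hb : bridgeCount G = G.edgeSet.ncard :=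
    congrArg Set.ncard (Set.ext fun _ => hG.isBridge_iff)
  have hm : G.edgeSet.ncard + 1 = Fintype.card V := by
    rw [← coe_edgeFinset, Set.ncard_coe_finset]
    exact hG.card_edgeFinset
  omega

end SimpleGraph

lemma cycleEdgeSets_mono (h : H ≤ G) : cycleEdgeSets H ⊆ cycleEdgeSets G := by
  rintro s ⟨u, w, hw, rfl⟩
  exact ⟨u, w.mapLe h, (Walk.isCycle_mapLe h).mpr hw, by simp⟩

namespace IsCactus

lemma mono (hG : IsCactus G) (h : H ≤ G) (hH : H.Connected) : IsCactus H :=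
  ⟨hH, fun _ h₁ _ h₂ => hG.2 _ (cycleEdgeSets_mono h h₁) _ (cycleEdgeSets_mono h h₂)⟩

lemma isBridge_deleteEdges_of_mem_edges (hG : IsCactus G) {u : V} {w : G.Walk u u}
    (hw : w.IsCycle) {e g : Sym2 V} (he : e ∈ w.edges) (hg : g ∈ w.edges) (hge : g ≠ e) :
    (G.deleteEdges {e}).IsBridge g := by
  have hgE : g ∈ (G.deleteEdges {e}).edgeSet := by
    rw [edgeSet_deleteEdges]
    exact ⟨w.edges_subset_edgeSet hg, hge⟩
  rw [isBridge_iff_forall_cycle_notMem hgE]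
  intro x p hp hgp
  have hsame_cycle := hG.2 _ (cycleEdgeSets_mono (G.deleteEdges_le _) ⟨x, p, hp, rfl⟩) _
    ⟨u, w, hw, rfl⟩ ⟨g, hgp, hg⟩
  have hep : e ∈ p.edges := by
    change e ∈ {f | f ∈ p.edges}
    rw [hsame_cycle]
    exact he
  simpa [edgeSet_deleteEdges] using p.edges_subset_edgeSet hep

lemma bridgeCount_add_two_le [Finite V] (hG : IsCactus G) {u : V} {w : G.Walk u u}
    (hw : w.IsCycle) {e : Sym2 V} (he : e ∈ w.edges) :
    bridgeCount G + 2 ≤ bridgeCount (G.deleteEdges {e}) := by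
  classical
  set C := w.edges.toFinset.erase e
  have hC : 2 ≤ C.card := by
    rw [Finset.card_erase_of_mem (List.mem_toFinset.mpr he),
      List.toFinset_card_of_nodup hw.edges_nodup, w.length_edges]
    have := hw.three_le_length
    omega
  have hdisj : Disjoint {g | G.IsBridge g} (C : Set (Sym2 V)) :=
    Set.disjoint_left.mpr fun g hg hgC =>
      hg.notMem_edges_of_isCycle hw (List.mem_toFinset.mp (Finset.mem_erase.mp hgC).2)
  have hsub : {g | G.IsBridge g} ∪ (C : Set (Sym2 V)) ⊆ {g | (G.deleteEdges {e}).IsBridge g} := by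
    rintro g (hg | hgC)
    · exact IsBridge.anti (G.deleteEdges_le _) hg
    · obtain ⟨hge, hgw⟩ := Finset.mem_erase.mp hgC
      exact hG.isBridge_deleteEdges_of_mem_edges hw he (List.mem_toFinset.mp hgw) hge
  calc bridgeCount G + 2 ≤ ({g | G.IsBridge g} ∪ (C : Set (Sym2 V))).ncard := by
        rw [Set.ncard_union_eq hdisj, Set.ncard_coe_finset, bridgeCount]
        omega
    _ ≤ bridgeCount (G.deleteEdges {e}) := Set.ncard_le_ncard hsub

theorem two_mul_ncard_edgeSet_add_bridgeCount_le [Fintype V] {G : SimpleGraph V}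
    (hG : IsCactus G) :
    2 * G.edgeSet.ncard + bridgeCount G ≤ 3 * (Fintype.card V - 1) := by
  by_cases hac : G.IsAcyclic
  · exact (IsTree.two_mul_ncard_edgeSet_add_bridgeCount ⟨hG.1, hac⟩).le
  obtain ⟨u, w, hw⟩ : ∃ (u : V) (w : G.Walk u u), w.IsCycle := by
    simpa [IsAcyclic] using hac
  obtain ⟨e, he⟩ : ∃ e, e ∈ w.edges :=
    List.exists_mem_of_ne_nil _ (Walk.edges_eq_nil.not.mpr hw.not_nil)
  have heG : e ∈ G.edgeSet := w.edges_subset_edgeSet he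
  have hG' : IsCactus (G.deleteEdges {e}) := by
    refine hG.mono (G.deleteEdges_le _) ?_
    induction e with
    | h x y => exact hG.1.connected_delete_edge_of_not_isBridge fun hb =>
        hb.notMem_edges_of_isCycle hw he
  have hm : (G.deleteEdges {e}).edgeSet.ncard + 1 = G.edgeSet.ncard := by
    rw [edgeSet_deleteEdges, Set.ncard_sdiff_singleton_add_one heG]
  have hIH := two_mul_ncard_edgeSet_add_bridgeCount_le hG'
  have hbridges := hG.bridgeCount_add_two_le hw he
  omega
termination_by G.edgeSet.ncard
decreasing_by omega

end IsCactus

end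

/-- A cactus graph with `n` vertices, `m` edges and `b` bridges
satisfies `m ≤ ⌊(3(n-1) - b)/2⌋`. -/
theorem stmt3 {V : Type*} [Fintype V] (G : SimpleGraph V) (hG : IsCactus G) :
    G.edgeSet.ncard ≤ (3 * (Fintype.card V - 1) - bridgeCount G) / 2 := by
  have := hG.two_mul_ncard_edgeSet_add_bridgeCount_le
  omega
end

section
/- Let G be a cactus graph with n > 2 vertices and b bridges, and let d be its degree sequence. Then b ≥ β, where β = max{μ_1, (μ_1+μ_odd)/2}. -/
open Finset SimpleGraph

/-! At a vertex `v` of a cactus the non-bridge edges come in pairs, two for each cycle through `v`,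
so every vertex of odd degree lies on a bridge. Charging each odd vertex to such a bridge is at most
two-to-one, whence `μ₁ + μ_odd ≤ 2b`; on leaves it is one-to-one, since two leaves on a common
bridge would be adjacent leaves, i.e. a whole component with two vertices. -/

lemma Set.ncard_le_two_mul_ncard_of_forall_exists_mem {α : Type*} [Finite α] {S : Set α}
    {B : Set (Sym2 α)} (h : ∀ v ∈ S, ∃ e ∈ B, v ∈ e) : S.ncard ≤ 2 * B.ncard := by
  classical
  have := Fintype.ofFinite α
  rcases S.eq_empty_or_nonempty with rfl | ⟨v, -⟩
  · simp
  have : Nonempty (Sym2 α) := ⟨s(v, v)⟩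
  choose! f hfB hmem using h
  rw [ncard_eq_toFinset_card' S, ncard_eq_toFinset_card' B]
  refine card_le_mul_card_image_of_maps_to (f := f) (fun v hv => ?_) 2 fun e _ => ?_
  · rw [mem_toFinset] at hv ⊢
    exact hfB v hv
  · calc #{v ∈ S.toFinset | f v = e} ≤ #e.toFinset := Finset.card_le_card fun v hv => by
          rw [mem_filter, mem_toFinset] at hv
          exact Sym2.mem_toFinset.2 (hv.2 ▸ hmem v hv.1)
      _ ≤ 2 := by rw [Sym2.card_toFinset]; split_ifs <;> simp

namespace SimpleGraph

variable {V : Type*} {G : SimpleGraph V}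

lemma gdeg_eq_degree (v : V) [Fintype (G.neighborSet v)] : gdeg G v = G.degree v := by
  rw [gdeg, Set.ncard_eq_toFinset_card', ← neighborFinset_def, card_neighborFinset_eq_degree]

lemma not_isBridge_of_mem_cycleEdgeSets {s : Set (Sym2 V)} (hs : s ∈ cycleEdgeSets G)
    {e : Sym2 V} (he : e ∈ s) : ¬ G.IsBridge e := by
  obtain ⟨u, p, hp, rfl⟩ := hs
  exact fun hb => hb.notMem_edges_of_isCycle hp he

lemma exists_mem_cycleEdgeSets_of_not_isBridge {e : Sym2 V} (he : e ∈ G.edgeSet)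
    (hb : ¬ G.IsBridge e) : ∃ s ∈ cycleEdgeSets G, e ∈ s := by
  rw [isBridge_iff_forall_cycle_notMem he] at hb
  push Not at hb
  obtain ⟨u, p, hp, hep⟩ := hb
  exact ⟨_, ⟨u, p, hp, rfl⟩, hep⟩

open scoped Classical in
lemma even_card_incidenceFinset_filter_mem_cycleEdgeSets [Fintype V] (v : V)
    {s : Set (Sym2 V)} (hs : s ∈ cycleEdgeSets G) :
    Even #{e ∈ G.incidenceFinset v | e ∈ s} := by
  obtain ⟨u, p, hp, rfl⟩ := hs
  convert (hp.isTrail.even_countP_edges_iff v).2 (fun h => absurd rfl h) using 1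
  rw [List.countP_eq_length_filter,
    ← List.toFinset_card_of_nodup (hp.isTrail.edges_nodup.filter _)]
  congr 1
  ext e
  simp only [mem_filter, mem_incidenceFinset, Set.mem_ofPred_eq, List.mem_toFinset,
    List.mem_filter, decide_eq_true_eq, incidenceSet]
  exact ⟨fun ⟨⟨_, hv⟩, he⟩ => ⟨he, hv⟩,
    fun ⟨he, hv⟩ => ⟨⟨p.edges_subset_edgeSet he, hv⟩, he⟩⟩

open scoped Classical in
lemma IsCactus.even_card_incidenceFinset_filter_not_isBridge [Fintype V] (hG : IsCactus G)
    (v : V) : Even #{e ∈ G.incidenceFinset v | ¬ G.IsBridge e} := by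
  set N := {e ∈ G.incidenceFinset v | ¬ G.IsBridge e}
  have hcycle : ∀ e ∈ N, ∃ s ∈ cycleEdgeSets G, e ∈ s := fun e he => by
    rw [mem_filter, mem_incidenceFinset] at he
    exact exists_mem_cycleEdgeSets_of_not_isBridge (incidenceSet_subset G v he.1) he.2
  choose! cyc hcyc_mem hmem_cyc using hcycle
  have hfiber : ∀ e ∈ N,
      {e' ∈ N | cyc e' = cyc e} = {e' ∈ G.incidenceFinset v | e' ∈ cyc e} := by
    intro e he
    ext e'
    simp only [N, mem_filter]
    constructor
    · rintro ⟨⟨he'v, hb⟩, heq⟩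
      exact ⟨he'v, heq ▸ hmem_cyc e' (mem_filter.2 ⟨he'v, hb⟩)⟩
    · rintro ⟨he'v, he'⟩
      have hb := not_isBridge_of_mem_cycleEdgeSets (hcyc_mem e he) he'
      refine ⟨⟨he'v, hb⟩, ?_⟩
      exact hG.2 _ (hcyc_mem e' (mem_filter.2 ⟨he'v, hb⟩)) _ (hcyc_mem e he)
        ⟨e', hmem_cyc e' (mem_filter.2 ⟨he'v, hb⟩), he'⟩
  rw [card_eq_sum_card_fiberwise (f := cyc) (t := N.image cyc) fun e he => mem_image_of_mem _ he]
  refine even_sum _ fun s hs => ?_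
  obtain ⟨e, he, rfl⟩ := mem_image.1 hs
  rw [hfiber e he]
  exact even_card_incidenceFinset_filter_mem_cycleEdgeSets v (hcyc_mem e he)

lemma IsCactus.exists_isBridge_mem_of_odd_gdeg [Fintype V] (hG : IsCactus G) {v : V}
    (hv : Odd (gdeg G v)) : ∃ e, G.IsBridge e ∧ v ∈ e := by
  classical
  have hsplit := card_filter_add_card_filter_not (s := G.incidenceFinset v) (G.IsBridge ·)
  rw [card_incidenceFinset_eq_degree, ← gdeg_eq_degree] at hsplit
  have hodd : Odd #{e ∈ G.incidenceFinset v | G.IsBridge e} := by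
    rw [← hsplit] at hv
    exact (Nat.odd_add.1 hv).2 (hG.even_card_incidenceFinset_filter_not_isBridge v)
  obtain ⟨e, he⟩ := card_pos.1 hodd.pos
  rw [mem_filter, mem_incidenceFinset] at he
  exact ⟨e, he.2, he.1.2⟩

lemma eq_of_adj_of_gdeg_eq_one {v w x : V} (hv : gdeg G v = 1) (hw : G.Adj v w)
    (hx : G.Adj v x) : x = w := by
  obtain ⟨a, ha⟩ := Set.ncard_eq_one.1 hv
  have hw' : w ∈ G.neighborSet v := hw
  have hx' : x ∈ G.neighborSet v := hx
  rw [ha, Set.mem_singleton_iff] at hw' hx'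
  rw [hx', hw']

lemma Connected.not_adj_of_gdeg_eq_one [Fintype V] (hG : G.Connected)
    (hn : 2 < Fintype.card V) {v w : V} (hv : gdeg G v = 1) (hw : gdeg G w = 1) :
    ¬ G.Adj v w := by
  classical
  intro hvw
  obtain ⟨u, -, hu⟩ := exists_mem_notMem_of_card_lt_card
    ((card_le_two (a := v) (b := w)).trans_lt (hn.trans_eq (card_univ).symm))
  obtain ⟨d, -, hd_fst, hd_snd⟩ :=
    (hG v u).some.exists_boundary_dart {v, w} (by simp) (by simpa using hu)
  apply hd_snd
  rcases hd_fst with h | h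
  · have hadj : G.Adj v d.snd := h ▸ d.adj
    simp [eq_of_adj_of_gdeg_eq_one hv hvw hadj]
  · have hadj : G.Adj w d.snd := Set.mem_singleton_iff.1 h ▸ d.adj
    simp [eq_of_adj_of_gdeg_eq_one hw hvw.symm hadj]

lemma Connected.gmu1_le_bridgeCount [Fintype V] (hG : G.Connected) (hn : 2 < Fintype.card V)
    (hleaf : ∀ v, gdeg G v = 1 → ∃ e, G.IsBridge e ∧ v ∈ e) :
    gmu1 G ≤ bridgeCount G := by
  obtain ⟨u⟩ : Nonempty V := Fintype.card_pos_iff.1 (by omega)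
  have : Nonempty (Sym2 V) := ⟨s(u, u)⟩
  choose! f hf_bridge hf_mem using hleaf
  refine Set.ncard_le_ncard_of_injOn f (fun v hv => hf_bridge v hv) ?_
  intro v hv w hw hfvw
  by_contra hne
  have hedge : f v = s(v, w) := (Sym2.mem_and_mem_iff hne).1 ⟨hf_mem v hv, hfvw ▸ hf_mem w hw⟩
  have hbridge := hf_bridge v hv
  rw [hedge] at hbridge
  exact hG.not_adj_of_gdeg_eq_one hn hv hw (hbridge.reachable_iff_adj.1 (hG v w))

end SimpleGraph

lemma gmu1_add_gmuOdd {V : Type*} [Finite V] (G : SimpleGraph V) :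
    gmu1 G + gmuOdd G = {v | Odd (gdeg G v)}.ncard := by
  rw [gmu1, gmuOdd, ← Set.ncard_union_eq]
  · congr 1
    ext v
    simp only [Set.mem_union, Set.mem_ofPred_eq]
    constructor
    · rintro (h | h)
      · exact h ▸ odd_one
      · exact h.1
    · intro h
      by_cases h1 : gdeg G v = 1
      · exact .inl h1
      · exact .inr ⟨h, by have := h.pos; omega⟩
  · rw [Set.disjoint_left]
    intro v h1 h2
    simp only [Set.mem_ofPred_eq] at h1 h2
    omega

/-- A cactus graph with `n > 2` vertices has at least
`β = max {μ₁, (μ₁ + μ_odd)/2}` bridges. -/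
theorem stmt5 {V : Type*} [Fintype V] (G : SimpleGraph V) (hG : IsCactus G)
    (hn : 2 < Fintype.card V) :
    graphBeta G ≤ bridgeCount G := by
  have hodd : ∀ v, Odd (gdeg G v) → ∃ e, G.IsBridge e ∧ v ∈ e :=
    fun v hv => hG.exists_isBridge_mem_of_odd_gdeg hv
  refine max_le (hG.1.gmu1_le_bridgeCount hn fun v hv => hodd v (hv ▸ odd_one)) ?_
  rw [gmu1_add_gmuOdd]
  exact Nat.div_le_of_le_mul (Set.ncard_le_two_mul_ncard_of_forall_exists_mem hodd)
end

section
/- Let G be a bipartite cactus graph with n ≥ 4 vertices, m edges, and b bridges. Then m ≤ 2·⌊2(n − 1 − b)/3⌋ + b. -/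
open Finset SimpleGraph

/-!
Deleting an edge of a cycle keeps a graph connected and destroys at least that cycle, so a
connected graph with `c` cycles has `m ≤ n - 1 + c` edges. In a cactus the cycles partition the
edges that are not bridges, so `m - b` is the total length of the cycles; in a bipartite graph
every cycle has even length at least `4`. Hence `m - b = 2r` with `4c ≤ 2r`, and
`2r ≤ (n - 1 - b) + c ≤ (n - 1 - b) + r/2` gives `r ≤ ⌊2(n - 1 - b)/3⌋`.
-/

namespace SimpleGraph

variable {V : Type*} {G : SimpleGraph V}

lemma Walk.IsCycle.ncard_edges {u : V} {w : G.Walk u u} (hw : w.IsCycle) :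
    {e | e ∈ w.edges}.ncard = w.length := by
  classical
  rw [← w.length_edges, ← List.toFinset_card_of_nodup hw.edges_nodup, ← Set.ncard_coe_finset]
  simp

lemma cycleEdgeSets_deleteEdges_subset (A : Set (Sym2 V)) :
    cycleEdgeSets (G.deleteEdges A) ⊆ cycleEdgeSets G := by
  rintro s ⟨u, w, hw, rfl⟩
  have hle : ∀ e ∈ w.edges, e ∈ G.edgeSet := fun e he =>
    edgeSet_mono (deleteEdges_le A) (w.edges_subset_edgeSet he)
  exact ⟨u, w.transfer G hle, hw.transfer hle, by simp [Walk.edges_transfer]⟩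

lemma numCycles_deleteEdges_lt [Finite V] {u : V} {w : G.Walk u u} (hw : w.IsCycle)
    {e : Sym2 V} (he : e ∈ w.edges) : numCycles (G.deleteEdges {e}) < numCycles G := by
  refine Set.ncard_lt_ncard ⟨cycleEdgeSets_deleteEdges_subset _, fun hsub => ?_⟩
  obtain ⟨u', w', -, hw'⟩ := hsub ⟨u, w, hw, rfl⟩
  have : e ∈ {e | e ∈ w'.edges} := hw' ▸ he
  simpa using w'.edges_subset_edgeSet this

theorem Connected.ncard_edgeSet_le [Finite V] (hG : G.Connected) :
    G.edgeSet.ncard ≤ Nat.card V - 1 + numCycles G := by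
  induction hc : numCycles G using Nat.strong_induction_on generalizing G with
  | _ c ih =>
  obtain hnil | ⟨s, u, w, hw, rfl⟩ := (cycleEdgeSets G).eq_empty_or_nonempty
  · have htree : G.IsTree :=
      ⟨hG, fun v w hw => Set.eq_empty_iff_forall_notMem.mp hnil _ ⟨v, w, hw, rfl⟩⟩
    have := (isTree_iff_connected_and_card.mp htree).2
    rw [Nat.card_coe_set_eq] at this
    omega
  obtain ⟨e, he⟩ := List.exists_mem_of_length_pos
    (by rw [w.length_edges]; have := hw.three_le_length; omega : 0 < w.edges.length)
  cases e with | h x y =>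
  have hlt := numCycles_deleteEdges_lt hw he
  have hconn : (G.deleteEdges {s(x, y)}).Connected :=
    hG.connected_delete_edge_of_not_isBridge fun hb => hb.notMem_edges_of_isCycle hw he
  have hcard : (G.deleteEdges {s(x, y)}).edgeSet.ncard + 1 = G.edgeSet.ncard := by
    rw [edgeSet_deleteEdges, ← Set.ncard_singleton s(x, y)]
    exact Set.ncard_sdiff_add_ncard_of_subset
      (Set.singleton_subset_iff.mpr (w.edges_subset_edgeSet he))
  have := ih _ (hc ▸ hlt) hconn rfl
  omega

lemma Connected.setOf_isBridge_subset_edgeSet (hG : G.Connected) :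
    {e | G.IsBridge e} ⊆ G.edgeSet := by
  rintro ⟨u, v⟩ he
  exact (show G.IsBridge s(u, v) from he).reachable_iff_adj.mp (hG.preconnected u v)

lemma sUnion_cycleEdgeSets : ⋃₀ cycleEdgeSets G = G.edgeSet \ {e | G.IsBridge e} := by
  ext e
  constructor
  · rintro ⟨_, ⟨u, w, hw, rfl⟩, he⟩
    exact ⟨w.edges_subset_edgeSet he, fun hb => hb.notMem_edges_of_isCycle hw he⟩
  · rintro ⟨he, hb⟩
    rw [Set.mem_ofPred_eq, isBridge_iff_forall_cycle_notMem he] at hb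
    push Not at hb
    obtain ⟨u, w, hw, hew⟩ := hb
    exact ⟨_, ⟨u, w, hw, rfl⟩, hew⟩

lemma IsCactus.pairwiseDisjoint_cycleEdgeSets (hG : IsCactus G) :
    (cycleEdgeSets G).PairwiseDisjoint id := fun s hs t ht hst =>
  Set.disjoint_iff_inter_eq_empty.mpr <|
    Set.not_nonempty_iff_eq_empty.mp fun hst' => hst (hG.2 s hs t ht hst')

/-- Every edge of a cactus is either a bridge or lies on exactly one cycle. -/
theorem IsCactus.ncard_edgeSet [Finite V] (hG : IsCactus G) :
    G.edgeSet.ncard = bridgeCount G + ∑ᶠ s ∈ cycleEdgeSets G, s.ncard := by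
  rw [← Set.ncard_sdiff_add_ncard_of_subset hG.1.setOf_isBridge_subset_edgeSet, add_comm,
    ← sUnion_cycleEdgeSets, Set.sUnion_eq_biUnion,
    (Set.toFinite _).ncard_biUnion (fun s _ => Set.toFinite s) hG.pairwiseDisjoint_cycleEdgeSets]
  rfl

lemma Colorable.even_ncard_of_mem_cycleEdgeSets (hG : G.Colorable 2) {s : Set (Sym2 V)}
    (hs : s ∈ cycleEdgeSets G) : Even s.ncard := by
  obtain ⟨u, w, hw, rfl⟩ := hs
  rw [hw.ncard_edges]
  exact two_colorable_iff_forall_loop_even.mp hG u w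

lemma Colorable.four_le_ncard_of_mem_cycleEdgeSets (hG : G.Colorable 2) {s : Set (Sym2 V)}
    (hs : s ∈ cycleEdgeSets G) : 4 ≤ s.ncard := by
  obtain ⟨k, hk⟩ := hG.even_ncard_of_mem_cycleEdgeSets hs
  obtain ⟨u, w, hw, rfl⟩ := hs
  have := hw.three_le_length
  rw [hw.ncard_edges] at hk ⊢
  omega

lemma Colorable.even_sum_ncard_cycleEdgeSets (hG : G.Colorable 2) :
    Even (∑ᶠ s ∈ cycleEdgeSets G, s.ncard) :=
  finsum_mem_induction Even Even.zero (fun _ _ => Even.add)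
    fun _ hs => hG.even_ncard_of_mem_cycleEdgeSets hs

lemma Colorable.four_mul_numCycles_le [Finite V] (hG : G.Colorable 2) :
    4 * numCycles G ≤ ∑ᶠ s ∈ cycleEdgeSets G, s.ncard := by
  have hfin := Set.toFinite (cycleEdgeSets G)
  rw [finsum_mem_eq_finite_toFinset_sum _ hfin, numCycles, Set.ncard_eq_toFinset_card _ hfin,
    mul_comm, ← smul_eq_mul]
  exact Finset.card_nsmul_le_sum _ _ _ fun s hs =>
    hG.four_le_ncard_of_mem_cycleEdgeSets (hfin.mem_toFinset.mp hs)

end SimpleGraph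

theorem stmt7_general {V : Type*} [Fintype V] (G : SimpleGraph V) (hG : IsCactus G)
    (hbip : G.Colorable 2) :
    G.edgeSet.ncard ≤
      2 * (2 * (Fintype.card V - 1 - bridgeCount G) / 3) + bridgeCount G := by
  have hm := hG.1.ncard_edgeSet_le
  rw [Nat.card_eq_fintype_card] at hm
  have hsplit := hG.ncard_edgeSet
  have hcycles := hbip.four_mul_numCycles_le
  obtain ⟨r, hr⟩ := hbip.even_sum_ncard_cycleEdgeSets
  omega

/-- A bipartite cactus graph with `n ≥ 4` vertices, `m` edges and
`b` bridges satisfies `m ≤ 2⌊2(n - 1 - b)/3⌋ + b`. -/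
theorem stmt7 {V : Type*} [Fintype V] (G : SimpleGraph V) (hG : IsCactus G)
    (hbip : G.Colorable 2) (hn : 4 ≤ Fintype.card V) :
    G.edgeSet.ncard ≤
      2 * (2 * (Fintype.card V - 1 - bridgeCount G) / 3) + bridgeCount G :=
  stmt7_general G hG hbip
end
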